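/- arXiv:2405.10069 — 6 statements merged into one kernel-verified Lean document; each statement's English description precedes it below -/
import Mathlib

section
/- Let S be a family of subsets of a set M such that every member of S is either a singleton, a downward-closed set (initial segment) of a linear order on M, or a coset of a fixed subgroup W of an abelian group structure on M. Then S has breadth 2: for any finite collection A₁,...,Aₘ ∈ S (m ≥ 2) with nonempty intersection, there exist indices j, k such that A₁ ∩ ... ∩ Aₘ = Aⱼ ∩ Aₖ. -/
/-!
Fix a point `x` of the intersection. Every member of the family containing `x` that is not an
initial segment is `{x}` or the coset `x + W`, and `{x} ⊆ x + W`; initial segments of a linear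
order are totally ordered by inclusion. So the family is the union of two chains, and the
intersection of finitely many sets from two chains is the intersection of the least member of
each chain.
-/

namespace Set

variable {ι α : Type*} {A : ι → Set α}

theorem iInter_eq_inter_of_forall_subset {j k : ι} (h : ∀ i, A j ⊆ A i ∨ A k ⊆ A i) :
    ⋂ i, A i = A j ∩ A k := by
  refine (subset_inter (iInter_subset A j) (iInter_subset A k)).antisymm fun z ⟨hzj, hzk⟩ => ?_
  exact mem_iInter.2 fun i => (h i).elim (· hzj) (· hzk)

theorem exists_forall_subset_of_total [Finite ι] [Nonempty ι] (p : ι → Prop)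
    (hp : ∀ i j, p i → p j → A i ⊆ A j ∨ A j ⊆ A i) : ∃ j, ∀ i, p i → A j ⊆ A i := by
  by_cases hne : ∃ i, p i
  · obtain ⟨i₀, hi₀⟩ := hne
    have : Nonempty {i // p i} := ⟨⟨i₀, hi₀⟩⟩
    have hdir : Directed (· ⊇ ·) fun i : {i // p i} => A i := fun a b =>
      (hp a b a.2 b.2).elim (fun h => ⟨a, le_rfl, h⟩) fun h => ⟨b, h, le_rfl⟩
    obtain ⟨j, hj⟩ := hdir.finite_le id
    exact ⟨j, fun i hi => hj ⟨i, hi⟩⟩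
  · exact ⟨Classical.arbitrary ι, fun i hi => (hne ⟨i, hi⟩).elim⟩

theorem exists_iInter_eq_inter_of_total [Finite ι] [Nonempty ι] (p : ι → Prop)
    (hp : ∀ i j, p i → p j → A i ⊆ A j ∨ A j ⊆ A i)
    (hnp : ∀ i j, ¬p i → ¬p j → A i ⊆ A j ∨ A j ⊆ A i) :
    ∃ j k, ⋂ i, A i = A j ∩ A k := by
  obtain ⟨j, hj⟩ := exists_forall_subset_of_total p hp
  obtain ⟨k, hk⟩ := exists_forall_subset_of_total (¬p ·) hnp
  exact ⟨j, k, iInter_eq_inter_of_forall_subset fun i => (em (p i)).imp (hj i) (hk i)⟩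

end Set

theorem AddSubgroup.setOf_sub_mem_eq_of_sub_mem {M : Type*} [AddCommGroup M] (W : AddSubgroup M)
    {a x : M} (hx : x - a ∈ W) : {z | z - a ∈ W} = {z | z - x ∈ W} := by
  ext z
  rw [Set.mem_ofPred_eq, Set.mem_ofPred_eq, show z - a = z - x + (x - a) by abel]
  exact W.add_mem_cancel_right hx

theorem eq_singleton_or_eq_setOf_sub_mem {M : Type*} [AddCommGroup M] (W : AddSubgroup M)
    {A : Set M} {x : M} (hx : x ∈ A) (hA : (∃ a, A = {a}) ∨ ∃ a, A = {z | z - a ∈ W}) :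
    A = {x} ∨ A = {z | z - x ∈ W} := by
  rcases hA with ⟨a, rfl⟩ | ⟨a, rfl⟩
  · exact .inl (by rw [Set.mem_singleton_iff.1 hx])
  · exact .inr (W.setOf_sub_mem_eq_of_sub_mem hx)

/-- A family of singletons, initial segments, and cosets of a fixed subgroup has breadth 2. -/
theorem stmt_1 {M : Type*} [AddCommGroup M] [LinearOrder M] [IsOrderedAddMonoid M] (W : AddSubgroup M)
    (S : Set (Set M))
    (hS : ∀ A ∈ S, (∃ a, A = {a}) ∨ (∀ x y : M, x ∈ A → y ≤ x → y ∈ A) ∨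
      (∃ a, A = {x | x - a ∈ W}))
    (m : ℕ) (hm : 2 ≤ m) (A : Fin m → Set M) (hA : ∀ i, A i ∈ S)
    (hne : (⋂ i, A i).Nonempty) :
    ∃ j k, (⋂ i, A i) = A j ∩ A k := by
  have : Nonempty (Fin m) := ⟨⟨0, by omega⟩⟩
  obtain ⟨x, hx⟩ := hne
  have hx : ∀ i, x ∈ A i := Set.mem_iInter.1 hx
  have hpoint : ∀ i, ¬IsLowerSet (A i) → A i = {x} ∨ A i = {z | z - x ∈ W} := fun i hi =>
    eq_singleton_or_eq_setOf_sub_mem W (hx i) <| (hS _ (hA i)).imp_right <|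
      (Or.resolve_left · fun h => hi fun a b hba ha => h a b ha hba)
  have hxW : {x} ⊆ {z | z - x ∈ W} := by simp
  refine Set.exists_iInter_eq_inter_of_total (fun i => IsLowerSet (A i))
    (fun i j hi hj => hi.total hj) fun i j hi hj => ?_
  rcases hpoint i hi with h | h <;> rcases hpoint j hj with h' | h' <;> simp [h, h', hxW]
end

section
/- Let M be an ordered abelian group, N a proper dense subgroup, and let φ(x; y) define the set {x : y ≤ x < y+1 ∨ x − y ∈ N} for a fixed positive element 1 ∈ N. For every k there is a set A ⊆ M with |A| = k such that the family {A ∩ φ(M, b) : b ∈ M} has at least (k² + k + 2)/2 members: namely it contains ∅, all singletons of A, and all two-element subsets of A. -/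
/-!
Take `A` with its points more than `e` apart, such that the points of `A` other than one point `q`
lie in distinct cosets of `N`, and some coset `c + N` misses `A`. If `b ∈ c + N` lies just below
`x ∈ A` (cosets of a dense subgroup are dense), the interval `[b, b + e)` meets `A` only in `x`,
so `A ∩ φ(M, b) = {x} ∪ (A ∩ (c + N))`. With `c` the free coset this gives `{x}`; with `c = y` or
`c = x` it gives `{x, y}`, as one of these two cosets meets `A` inside `{x, y}`; and `b` above `A`
in the free coset gives `∅`. Such an `A` is obtained from `a` by dropping its last point, whose
coset becomes free, and adding a point `q` far above the others in the coset of `a 0`.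
-/

open Finset

theorem Nat.two_mul_choose_two_add_self (n : ℕ) : 2 * n.choose 2 + n = n ^ 2 := by
  induction n with
  | zero => rfl
  | succ n ih => rw [Nat.choose_succ_succ, Nat.choose_one_right]; linarith

theorem Finset.card_sq_add_card_add_two_le_two_mul_ncard {α : Type*} (A : Finset α)
    {F : Set (Set α)} (hF : F ⊆ 𝒫 (A : Set α))
    (hsmall : ∀ s ⊆ A, #s ≤ 2 → (s : Set α) ∈ F) :
    #A ^ 2 + #A + 2 ≤ 2 * F.ncard := by
  classical
  let S := (range 3).biUnion (A.powersetCard ·)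
  have hS : #S = 1 + #A + (#A).choose 2 := by
    rw [card_biUnion (fun _ _ _ _ h => A.pairwise_disjoint_powersetCard h)]
    simp [sum_range_succ, card_powersetCard]
  have hSF : #S ≤ F.ncard := by
    rw [← Set.ncard_coe_finset]
    refine Set.ncard_le_ncard_of_injOn (↑) (fun s hs => ?_) Finset.coe_injective.injOn
      ((A.finite_toSet.powerset).subset hF)
    obtain ⟨r, hr, hs⟩ := mem_biUnion.mp hs
    rw [mem_range] at hr
    rw [mem_powersetCard] at hs
    exact hsmall s hs.1 (by omega)
  have := Nat.two_mul_choose_two_add_self #A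
  omega

theorem AddSubgroup.sub_mem_iff_of_sub_mem {M : Type*} [AddCommGroup M] (N : AddSubgroup M)
    {b c : M} (hbc : b - c ∈ N) (z : M) : z - b ∈ N ↔ z - c ∈ N := by
  rw [show z - c = (z - b) + (b - c) by abel]
  exact (N.add_mem_cancel_right hbc).symm

section

variable {M : Type*} [AddCommGroup M] [LinearOrder M]

def IsSpaced (e : M) (A : Set M) : Prop :=
  ∀ x ∈ A, ∀ y ∈ A, x < y → x + e < y

theorem Set.Subsingleton.isSpaced {A : Set M} (hA : A.Subsingleton) (e : M) : IsSpaced e A :=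
  fun _ hx _ hy hxy => absurd (hA hx hy) hxy.ne

theorem IsSpaced.mono {e : M} {A B : Set M} (hA : IsSpaced e A) (hBA : B ⊆ A) : IsSpaced e B :=
  fun x hx y hy => hA x (hBA hx) y (hBA hy)

variable (N : AddSubgroup M) (e : M)

-- `φ(M, b)` for `φ(x; y) := y ≤ x < y + e ∨ x - y ∈ N`.
def phiSet (b : M) : Set M :=
  Set.Ico b (b + e) ∪ {x | x - b ∈ N}

def traces (A : Set M) : Set (Set M) :=
  {s | ∃ b, s = A ∩ phiSet N e b}

theorem traces_subset_powerset (A : Set M) : traces N e A ⊆ 𝒫 A := by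
  rintro s ⟨b, rfl⟩
  exact Set.inter_subset_left

variable {N e}

theorem inter_phiSet_eq_of_forall_lt {A : Set M} {b c : M} (hAb : ∀ z ∈ A, z < b)
    (hbc : b - c ∈ N) : A ∩ phiSet N e b = {z ∈ A | z - c ∈ N} := by
  ext z
  simp only [phiSet, Set.mem_inter_iff, Set.mem_union, Set.mem_ofPred_eq,
    N.sub_mem_iff_of_sub_mem hbc]
  exact and_congr_right fun hz => or_iff_right fun hzb => (hAb z hz).not_ge hzb.1

variable [IsOrderedAddMonoid M]

theorem IsSpaced.eq_of_mem_Ico {A : Set M} (hA : IsSpaced e A) {x y b : M}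
    (hx : x ∈ A) (hy : y ∈ A) (hxb : x ∈ Set.Ico b (b + e)) (hyb : y ∈ Set.Ico b (b + e)) :
    x = y := by
  by_contra hne
  rcases lt_or_gt_of_ne hne with hlt | hlt
  · exact lt_irrefl _ (((hA x hx y hy hlt).trans hyb.2).trans_le (add_le_add_left hxb.1 e))
  · exact lt_irrefl _ (((hA y hy x hx hlt).trans hxb.2).trans_le (add_le_add_left hyb.1 e))

theorem IsSpaced.insert_of_forall_add_lt {A : Set M} (hA : IsSpaced e A) (he : 0 ≤ e) {t : M}
    (ht : ∀ x ∈ A, x + e < t) : IsSpaced e (insert t A) := by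
  rintro x (rfl | hx) y (rfl | hy) hxy
  · exact absurd hxy (lt_irrefl _)
  · exact absurd ((le_add_of_nonneg_right he).trans_lt (ht y hy)) (not_lt.mpr hxy.le)
  · exact ht x hx
  · exact hA x hx y hy hxy

theorem strictMono_of_add_lt {ι : Type*} [Preorder ι] (he : 0 ≤ e) {a : ι → M}
    (ha : ∀ i j, i < j → a i + e < a j) : StrictMono a :=
  fun i j hij => (le_add_of_nonneg_right he).trans_lt (ha i j hij)

theorem isSpaced_range {ι : Type*} [LinearOrder ι] (he : 0 ≤ e) {a : ι → M}
    (ha : ∀ i j, i < j → a i + e < a j) : IsSpaced e (Set.range a) := by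
  rintro _ ⟨i, rfl⟩ _ ⟨j, rfl⟩ hij
  exact ha i j ((strictMono_of_add_lt he ha).lt_iff_lt.mp hij)

theorem exists_sub_mem_Ioo (hdense : ∀ u v : M, u < v → ∃ n ∈ N, u < n ∧ n < v) (c : M)
    {u v : M} (huv : u < v) : ∃ b, b - c ∈ N ∧ u < b ∧ b < v := by
  obtain ⟨n, hn, hun, hnv⟩ := hdense (u - c) (v - c) (sub_lt_sub_right huv c)
  exact ⟨n + c, by simpa using hn, sub_lt_iff_lt_add.mp hun, lt_sub_iff_add_lt.mp hnv⟩

theorem inter_phiSet_eq_insert {A : Set M} (hA : IsSpaced e A) {x b c : M} (hx : x ∈ A)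
    (hxb : x ∈ Set.Ico b (b + e)) (hbc : b - c ∈ N) :
    A ∩ phiSet N e b = insert x {z ∈ A | z - c ∈ N} := by
  ext z
  simp only [phiSet, Set.mem_inter_iff, Set.mem_union, Set.mem_insert_iff, Set.mem_ofPred_eq,
    N.sub_mem_iff_of_sub_mem hbc]
  constructor
  · rintro ⟨hz, hzb | hzc⟩
    · exact Or.inl (hA.eq_of_mem_Ico hz hx hzb hxb)
    · exact Or.inr ⟨hz, hzc⟩
  · rintro (rfl | hz)
    · exact ⟨hx, Or.inl hxb⟩
    · exact ⟨hz.1, Or.inr hz.2⟩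

variable (hdense : ∀ u v : M, u < v → ∃ n ∈ N, u < n ∧ n < v) (he : 0 < e)
include hdense he

theorem insert_mem_traces {A : Set M} (hA : IsSpaced e A) {x : M} (hx : x ∈ A) (c : M) :
    insert x {z ∈ A | z - c ∈ N} ∈ traces N e A := by
  obtain ⟨b, hbc, hxb, hbx⟩ := exists_sub_mem_Ioo hdense c (sub_lt_self x he)
  exact ⟨b, (inter_phiSet_eq_insert hA hx ⟨hbx.le, sub_lt_iff_lt_add.mp hxb⟩ hbc).symm⟩

theorem sep_mem_traces {A : Set M} (hA : BddAbove A) (c : M) :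
    {z ∈ A | z - c ∈ N} ∈ traces N e A := by
  obtain ⟨m, hm⟩ := hA
  obtain ⟨b, hbc, hmb, -⟩ := exists_sub_mem_Ioo hdense c (lt_add_of_pos_right m he)
  exact ⟨b, (inter_phiSet_eq_of_forall_lt (fun z hz => (hm hz).trans_lt hmb) hbc).symm⟩

section Traces

variable {A : Finset M} (hA : IsSpaced e (A : Set M)) {c : M} (hc : ∀ z ∈ A, z - c ∉ N)
  {q : M} (hq : ((A : Set M) \ {q}).Pairwise fun z w => z - w ∉ N)

include hc in
theorem empty_mem_traces : ∅ ∈ traces N e A := by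
  have hsep : {z ∈ (A : Set M) | z - c ∈ N} = ∅ := Set.sep_eq_empty_iff_mem_false.mpr hc
  exact hsep ▸ sep_mem_traces hdense he A.bddAbove c

include hA hc in
theorem singleton_mem_traces {x : M} (hx : x ∈ A) : {x} ∈ traces N e A := by
  have hsep : {z ∈ (A : Set M) | z - c ∈ N} = ∅ := Set.sep_eq_empty_iff_mem_false.mpr hc
  have hx' := insert_mem_traces hdense he hA hx c
  rwa [hsep, insert_empty_eq] at hx'

include hA in
theorem pair_mem_traces_of_forall_sub_mem {x y : M} (hx : x ∈ A) (hy : y ∈ A)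
    (hxy : ∀ z ∈ A, z - y ∈ N → z = x ∨ z = y) : {x, y} ∈ traces N e A := by
  convert insert_mem_traces hdense he hA hx y using 1
  ext z
  simp only [Set.mem_insert_iff, Set.mem_singleton_iff, Set.mem_ofPred_eq, mem_coe]
  constructor
  · rintro (rfl | rfl)
    · exact .inl rfl
    · exact .inr ⟨hy, by simp⟩
  · rintro (rfl | ⟨hz, hzy⟩)
    · exact .inl rfl
    · exact hxy z hz hzy

include hA hq in
theorem pair_mem_traces {x y : M} (hx : x ∈ A) (hy : y ∈ A) (hxy : x ≠ y) :
    {x, y} ∈ traces N e A := by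
  have hcoset : ∀ {w}, w ∈ A → w ≠ q → ∀ z ∈ A, z - w ∈ N → z = w ∨ z = q := by
    intro w hw hwq z hz hzw
    by_cases hzq : z = q
    · exact .inr hzq
    · exact .inl (hq.eq ⟨hz, hzq⟩ ⟨hw, hwq⟩ (not_not.mpr hzw))
  by_cases hxq : x = q
  · subst hxq
    exact pair_mem_traces_of_forall_sub_mem hdense he hA hx hy fun z hz hzy =>
      (hcoset hy hxy.symm z hz hzy).symm
  by_cases hyq : y = q
  · subst hyq
    rw [Set.pair_comm]
    exact pair_mem_traces_of_forall_sub_mem hdense he hA hy hx fun z hz hzx =>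
      (hcoset hx hxq z hz hzx).symm
  by_cases hqy : q - y ∈ N
  · have hqx : q - x ∉ N := fun hqx =>
      hq ⟨hx, hxq⟩ ⟨hy, hyq⟩ hxy (sub_sub_sub_cancel_left y x q ▸ N.sub_mem hqy hqx)
    rw [Set.pair_comm]
    exact pair_mem_traces_of_forall_sub_mem hdense he hA hy hx fun z hz hzx =>
      .inr ((hcoset hx hxq z hz hzx).resolve_right fun hzq => hqx (hzq ▸ hzx))
  · exact pair_mem_traces_of_forall_sub_mem hdense he hA hx hy fun z hz hzy =>
      .inr ((hcoset hy hyq z hz hzy).resolve_right fun hzq => hqy (hzq ▸ hzy))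

include hA hc hq in
theorem card_sq_add_card_add_two_le_two_mul_ncard_traces :
    #A ^ 2 + #A + 2 ≤ 2 * (traces N e A).ncard := by
  refine A.card_sq_add_card_add_two_le_two_mul_ncard (traces_subset_powerset N e _) ?_
  intro s hs hs2
  obtain h | h | h : #s = 0 ∨ #s = 1 ∨ #s = 2 := by omega
  · rw [card_eq_zero.mp h, coe_empty]
    exact empty_mem_traces hdense he hc
  · obtain ⟨x, rfl⟩ := card_eq_one.mp h
    rw [coe_singleton]
    exact singleton_mem_traces hdense he hA hc (hs (mem_singleton_self x))
  · obtain ⟨x, y, hxy, rfl⟩ := card_eq_two.mp h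
    rw [coe_pair]
    exact pair_mem_traces hdense he hA hq (hs (by simp)) (hs (by simp)) hxy

end Traces

theorem exists_finset_isSpaced_of_sub_notMem {m : ℕ} (a : Fin (m + 2) → M)
    (ha : ∀ i j, i < j → a i + e < a j) (haN : ∀ i j, i ≠ j → a i - a j ∉ N) :
    ∃ A : Finset M, #A = m + 2 ∧ IsSpaced e (A : Set M) ∧
      (∃ c, ∀ z ∈ A, z - c ∉ N) ∧ ∃ q, ((A : Set M) \ {q}).Pairwise fun z w => z - w ∉ N := by
  classical
  set B := (univ.erase (Fin.last (m + 1))).image a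
  have hBa : (B : Set M) ⊆ Set.range a := by
    rw [coe_image]
    exact Set.image_subset_range _ _
  obtain ⟨u, hu⟩ := B.bddAbove
  obtain ⟨t, ht, hut, -⟩ := exists_sub_mem_Ioo hdense (a 0) (lt_add_of_pos_right (u + e) he)
  have htB : ∀ z ∈ (B : Set M), z + e < t := fun z hz =>
    (add_le_add_left (hu hz) e).trans_lt hut
  have htB' : t ∉ B := fun h => not_lt.mpr (le_add_of_nonneg_right he.le) (htB t h)
  refine ⟨insert t B, ?_, ?_, ⟨a (Fin.last (m + 1)), ?_⟩, t, ?_⟩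
  · rw [card_insert_of_notMem htB',
      card_image_of_injective _ (strictMono_of_add_lt he.le ha).injective,
      card_erase_of_mem (mem_univ _), card_univ, Fintype.card_fin]
    rfl
  · rw [coe_insert]
    exact ((isSpaced_range he.le ha).mono hBa).insert_of_forall_add_lt he.le htB
  · intro z hz
    rcases mem_insert.mp hz with rfl | hz
    · rw [← sub_add_sub_cancel z (a 0), N.add_mem_cancel_left ht]
      exact haN 0 (Fin.last (m + 1)) (by simp [Fin.ext_iff])
    · obtain ⟨i, hi, rfl⟩ := mem_image.mp hz
      exact haN i _ (ne_of_mem_erase hi)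
  · rw [coe_insert, Set.insert_sdiff_self_of_notMem (mod_cast htB')]
    exact (Pairwise.range_pairwise (r := fun z w => z - w ∉ N) haN).mono hBa

end

theorem stmt_4_general {M : Type*} [AddCommGroup M] [LinearOrder M] [IsOrderedAddMonoid M] (N : AddSubgroup M)
    (hproper : N ≠ ⊤)
    (hdense : ∀ u v : M, u < v → ∃ n ∈ N, u < n ∧ n < v)
    (e : M) (he : 0 < e) (k : ℕ) (a : Fin k → M)
    (ha : ∀ i j : Fin k, i < j → a i + e < a j)
    (haN : ∀ i j : Fin k, i ≠ j → a i - a j ∉ N) :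
    ∃ A : Finset M, A.card = k ∧
      k ^ 2 + k + 2 ≤ 2 * Set.ncard
        {s : Set M | ∃ b : M, s = ↑A ∩ {x | (b ≤ x ∧ x < b + e) ∨ x - b ∈ N}} := by
  obtain ⟨A, hcard, hA, ⟨c, hc⟩, q, hq⟩ : ∃ A : Finset M, #A = k ∧ IsSpaced e (A : Set M) ∧
      (∃ c, ∀ z ∈ A, z - c ∉ N) ∧ ∃ q, ((A : Set M) \ {q}).Pairwise fun z w => z - w ∉ N := by
    rcases k with _ | _ | m
    · exact ⟨∅, rfl, by simpa using Set.subsingleton_empty.isSpaced e, ⟨0, by simp⟩, 0, by simp⟩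
    · obtain ⟨d, hd⟩ := SetLike.exists_not_mem_of_ne_top N hproper
      exact ⟨{a 0}, rfl, by simpa using Set.subsingleton_singleton.isSpaced e,
        ⟨a 0 - d, by simpa using hd⟩, a 0, by simp⟩
    · exact exists_finset_isSpaced_of_sub_notMem hdense he a ha haN
  subst hcard
  exact ⟨A, rfl, card_sq_add_card_add_two_le_two_mul_ncard_traces hdense he hA hc hq⟩

/-- Lower bound `(k²+k+2)/2` for the number of traces of the formula
`y ≤ x < y+1 ∨ x - y ∈ N` on a suitable `k`-element set. -/
theorem stmt_4 {M : Type*} [AddCommGroup M] [LinearOrder M] [IsOrderedAddMonoid M] (N : AddSubgroup M)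
    (hproper : N ≠ ⊤)
    (hdense : ∀ u v : M, u < v → ∃ n ∈ N, u < n ∧ n < v)
    (e : M) (heN : e ∈ N) (he : 0 < e) (k : ℕ) (a : Fin k → M)
    (ha : ∀ i j : Fin k, i < j → a i + e < a j)
    (haN : ∀ i j : Fin k, i ≠ j → a i - a j ∉ N) :
    ∃ A : Finset M, A.card = k ∧
      k ^ 2 + k + 2 ≤ 2 * Set.ncard
        {s : Set M | ∃ b : M, s = ↑A ∩ {x | (b ≤ x ∧ x < b + e) ∨ x - b ∈ N}} :=
  stmt_4_general N hproper hdense e he k a ha haN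
end

section
/- Let M be a densely ordered abelian group, N a dense subgroup, 1 ∈ N positive, and a₁, a₂, ... a sequence in M with aᵢ + 1 < a_{i+1} and aᵢ − aⱼ ∉ N for i ≠ j. Then for every pair (i, j) there exists c ∈ M with aᵢ < c < aᵢ + 1, c − aⱼ ∈ N, and for all k ≠ i, c ∉ (a_k, a_k + 1), and for all l ≠ j, c − a_l ∉ N. -/
/-!
Choose `n ∈ N` in the nonempty interval `(aᵢ - aⱼ, aᵢ - aⱼ + 1)` and put `c = aⱼ + n`. The gaps
`aₖ + 1 < aₖ₊₁` make the intervals `(aₖ, aₖ + 1)` pairwise disjoint, and `c - aₗ ∉ N` for `l ≠ j`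
because it differs from `c - aⱼ ∈ N` by `aⱼ - aₗ ∉ N`.
-/

open Set Function

section Gaps

variable {M : Type*} [AddCommGroup M] [LinearOrder M] [IsOrderedAddMonoid M]
  {e : M} {a : ℕ → M}

theorem add_lt_of_lt_of_add_lt_succ (he : 0 < e) (ha : ∀ i, a i + e < a (i + 1))
    {m n : ℕ} (hmn : m < n) : a m + e < a n := by
  have hmono : StrictMono a :=
    strictMono_nat_of_lt_succ fun i => (lt_add_of_pos_right _ he).trans (ha i)
  exact (ha m).trans_le (hmono.monotone hmn)

theorem pairwise_disjoint_Ioo_of_add_lt_succ (he : 0 < e) (ha : ∀ i, a i + e < a (i + 1)) :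
    Pairwise (Disjoint on fun k => Ioo (a k) (a k + e)) := by
  intro k l hkl
  rw [onFun, disjoint_left]
  rintro c ⟨hkc, hck⟩ ⟨hlc, hcl⟩
  rcases hkl.lt_or_gt with hlt | hlt
  · exact (hck.trans (add_lt_of_lt_of_add_lt_succ he ha hlt)).not_gt hlc
  · exact (hcl.trans (add_lt_of_lt_of_add_lt_succ he ha hlt)).not_gt hkc

end Gaps

theorem AddSubgroup.sub_notMem_of_sub_mem {G : Type*} [AddCommGroup G] (N : AddSubgroup G)
    {c x y : G} (hc : c - x ∈ N) (hxy : x - y ∉ N) : c - y ∉ N := fun hcy =>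
  hxy (by simpa only [sub_sub_sub_cancel_left] using N.sub_mem hcy hc)

theorem AddSubgroup.exists_mem_Ioo_sub_mem {M : Type*} [AddCommGroup M] [LinearOrder M]
    [IsOrderedAddMonoid M] (N : AddSubgroup M)
    (hdense : ∀ u v : M, u < v → ∃ n ∈ N, u < n ∧ n < v) {u v : M} (huv : u < v) (x : M) :
    ∃ c ∈ Ioo u v, c - x ∈ N := by
  obtain ⟨n, hnN, hun, hnv⟩ := hdense (u - x) (v - x) (sub_lt_sub_right huv x)
  refine ⟨x + n, ⟨?_, ?_⟩, by simpa using hnN⟩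
  · rwa [sub_lt_iff_lt_add'] at hun
  · rwa [lt_sub_iff_add_lt'] at hnv

theorem stmt_6_general {M : Type*} [AddCommGroup M] [LinearOrder M] [IsOrderedAddMonoid M]
    (N : AddSubgroup M)
    (hdense : ∀ u v : M, u < v → ∃ n ∈ N, u < n ∧ n < v)
    (e : M) (he : 0 < e) (a : ℕ → M)
    (ha : ∀ i : ℕ, a i + e < a (i + 1))
    (haN : ∀ i j : ℕ, i ≠ j → a i - a j ∉ N) :
    ∀ i j : ℕ, ∃ c : M, a i < c ∧ c < a i + e ∧ c - a j ∈ N ∧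
      (∀ k : ℕ, k ≠ i → ¬(a k < c ∧ c < a k + e)) ∧
      (∀ l : ℕ, l ≠ j → c - a l ∉ N) := by
  intro i j
  obtain ⟨c, hc, hcN⟩ :=
    N.exists_mem_Ioo_sub_mem hdense (lt_add_of_pos_right (a i) he) (a j)
  refine ⟨c, hc.1, hc.2, hcN, fun k hk hck => ?_, fun l hl =>
    N.sub_notMem_of_sub_mem hcN (haN j l (Ne.symm hl))⟩
  exact disjoint_left.mp (pairwise_disjoint_Ioo_of_add_lt_succ he ha hk) hck hc

/-- ICT pattern of depth 2: a point realizing exactly the `i`-th interval condition and the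
`j`-th coset condition. -/
theorem stmt_6 {M : Type*} [AddCommGroup M] [LinearOrder M] [IsOrderedAddMonoid M] [DenselyOrdered M]
    (N : AddSubgroup M)
    (hdense : ∀ u v : M, u < v → ∃ n ∈ N, u < n ∧ n < v)
    (e : M) (heN : e ∈ N) (he : 0 < e) (a : ℕ → M)
    (ha : ∀ i : ℕ, a i + e < a (i + 1))
    (haN : ∀ i j : ℕ, i ≠ j → a i - a j ∉ N) :
    ∀ i j : ℕ, ∃ c : M, a i < c ∧ c < a i + e ∧ c - a j ∈ N ∧
      (∀ k : ℕ, k ≠ i → ¬(a k < c ∧ c < a k + e)) ∧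
      (∀ l : ℕ, l ≠ j → c - a l ∉ N) :=
  stmt_6_general N hdense e he a ha haN
end

section
/- Let K be an ordered field, V an ordered K-vector space, W a proper subspace dense in V, with 1 ∈ W, 1 > 0. For every k there exist a₁,...,a_k ∈ V with aᵢ + 1 < a_{i+1} and aᵢ − aⱼ ∉ W for all i ≠ j. -/
/-!
Fix `a ∉ W`. Every coset `c • a + W` is dense in `V`, so we may pick `aᵢ ∈ i • a + W` inside the
interval `(2i • e, 2i • e + e)`; these intervals are more than `e` apart. For `i ≠ j` we get
`aᵢ - aⱼ ∈ (i - j) • a + W`, which misses `W` because `(i - j) • a ∉ W`.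
-/

theorem exists_sub_mem_of_dense {V S : Type*} [AddCommGroup V] [LinearOrder V]
    [IsOrderedAddMonoid V] [SetLike S V] {W : S}
    (hdense : ∀ u v : V, u < v → ∃ w ∈ W, u < w ∧ w < v) (x : V) {u v : V} (huv : u < v) :
    ∃ y, y - x ∈ W ∧ u < y ∧ y < v := by
  obtain ⟨w, hw, huw, hwv⟩ := hdense (u - x) (v - x) (sub_lt_sub_right huv x)
  exact ⟨x + w, by rwa [add_sub_cancel_left], sub_lt_iff_lt_add'.mp huw,
    lt_sub_iff_add_lt'.mp hwv⟩

theorem Submodule.sub_notMem_of_sub_smul_mem {K V : Type*} [DivisionRing K] [AddCommGroup V]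
    [Module K V] {W : Submodule K V} {a x y : V} {c d : K} (ha : a ∉ W) (hcd : c ≠ d)
    (hx : x - c • a ∈ W) (hy : y - d • a ∈ W) : x - y ∉ W := by
  intro hxy
  have hca : (c - d) • a ∈ W := by
    have h := W.add_mem (W.sub_mem hxy hx) hy
    rwa [show x - y - (x - c • a) + (y - d • a) = (c - d) • a by rw [sub_smul]; abel] at h
  exact ha ((W.smul_mem_iff (sub_ne_zero.mpr hcd)).mp hca)

theorem add_lt_of_lt_nsmul_add_of_nsmul_lt {V : Type*} [AddCommMonoid V] [PartialOrder V]
    [IsOrderedCancelAddMonoid V] {e x y : V} (he : 0 ≤ e) {m n : ℕ} (hmn : m < n)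
    (hx : x < m • (e + e) + e) (hy : n • (e + e) < y) : x + e < y :=
  calc x + e < m • (e + e) + e + e := add_lt_add_left hx e
    _ = (m + 1) • (e + e) := by rw [succ_nsmul, add_assoc]
    _ ≤ n • (e + e) := nsmul_le_nsmul_left (add_nonneg he he) hmn
    _ < y := hy

theorem stmt_12_general {K V : Type*} [Field K] [LinearOrder K] [IsStrictOrderedRing K]
    [AddCommGroup V] [LinearOrder V] [IsOrderedAddMonoid V]
    [Module K V]
    (W : Submodule K V) (hproper : W ≠ ⊤)
    (hdense : ∀ u v : V, u < v → ∃ w ∈ W, u < w ∧ w < v)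
    (e : V) (he : 0 < e) :
    ∀ k : ℕ, ∃ a : Fin k → V,
      (∀ i j : Fin k, i < j → a i + e < a j) ∧
      (∀ i j : Fin k, i ≠ j → a i - a j ∉ W) := by
  intro k
  obtain ⟨a, -, ha⟩ := SetLike.exists_of_lt hproper.lt_top
  choose b hbW hlo hhi using fun i : ℕ ↦
    exists_sub_mem_of_dense hdense ((i : K) • a) (lt_add_of_pos_right (i • (e + e)) he)
  refine ⟨fun i ↦ b i, fun i j hij ↦ ?_, fun i j hij ↦ ?_⟩
  · exact add_lt_of_lt_nsmul_add_of_nsmul_lt he.le hij (hhi i) (hlo j)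
  · refine W.sub_notMem_of_sub_smul_mem ha ?_ (hbW i) (hbW j)
    exact Nat.cast_injective.ne (Fin.val_injective.ne hij)

/-- In a dense pair of ordered vector spaces, for every `k` there are `a₁, …, a_k` with
`aᵢ + 1 < a_{i+1}` and `aᵢ - aⱼ ∉ W` for `i ≠ j`. -/
theorem stmt_12 {K V : Type*} [Field K] [LinearOrder K] [IsStrictOrderedRing K]
    [AddCommGroup V] [LinearOrder V] [IsOrderedAddMonoid V]
    [Module K V] [PosSMulStrictMono K V] [PosSMulReflectLT K V]
    (W : Submodule K V) (hproper : W ≠ ⊤)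
    (hdense : ∀ u v : V, u < v → ∃ w ∈ W, u < w ∧ w < v)
    (e : V) (heW : e ∈ W) (he : 0 < e) :
    ∀ k : ℕ, ∃ a : Fin k → V,
      (∀ i j : Fin k, i < j → a i + e < a j) ∧
      (∀ i j : Fin k, i ≠ j → a i - a j ∉ W) :=
  stmt_12_general W hproper hdense e he
end

section
/- Sauer–Shelah lemma: if a set family F on a finite set A of size n has VC-dimension at most d, then |{S ∩ A : S ∈ F}| ≤ Σ_{i=0}^{d} C(n, i). -/
/-!
Identify the trace of `F` on `A` with a family `𝒜` of subsets of `A`. By Pajor's form of the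
Sauer–Shelah lemma, `|𝒜|` is at most the number of sets shattered by `𝒜`. Such a set lies
in `A` and is shattered by `F` itself, so by hypothesis it has at most `d` elements, and `A` has
`∑_{i ≤ d} C(n, i)` subsets of that size.
-/

open Finset

namespace Finset

variable {α : Type*}

theorem card_le_sum_choose_of_subset_powerset [DecidableEq α] {𝒜 : Finset (Finset α)}
    {A : Finset α} {d : ℕ} (h𝒜 : 𝒜 ⊆ A.powerset) (hd : 𝒜.vcDim ≤ d) :
    #𝒜 ≤ ∑ i ∈ range (d + 1), (#A).choose i := by
  have hsub : 𝒜.shatterer ⊆ (range (d + 1)).biUnion A.powersetCard := by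
    intro s hs
    obtain ⟨u, hu, hsu⟩ := (mem_shatterer.1 hs).exists_superset
    have hsA : s ⊆ A := hsu.trans (mem_powerset.1 (h𝒜 hu))
    have hsd : #s ≤ d := ((mem_shatterer.1 hs).card_le_vcDim).trans hd
    exact mem_biUnion.2 ⟨#s, mem_range.2 (Nat.lt_succ_of_le hsd), mem_powersetCard.2 ⟨hsA, rfl⟩⟩
  calc #𝒜 ≤ #𝒜.shatterer := card_le_card_shatterer 𝒜
    _ ≤ #((range (d + 1)).biUnion A.powersetCard) := card_le_card hsub
    _ ≤ ∑ i ∈ range (d + 1), #(A.powersetCard i) := card_biUnion_le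
    _ = ∑ i ∈ range (d + 1), (#A).choose i := by simp_rw [card_powersetCard]

open Classical in
noncomputable def trace (F : Set (Set α)) (A : Finset α) : Finset (Finset α) :=
  {t ∈ A.powerset | ∃ S ∈ F, (t : Set α) = ↑A ∩ S}

theorem mem_trace {F : Set (Set α)} {A t : Finset α} :
    t ∈ trace F A ↔ t ⊆ A ∧ ∃ S ∈ F, (t : Set α) = ↑A ∩ S := by
  classical
  simp only [trace, mem_filter, mem_powerset]

theorem trace_subset_powerset (F : Set (Set α)) (A : Finset α) : trace F A ⊆ A.powerset :=
  fun _ ht => mem_powerset.2 (mem_trace.1 ht).1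

theorem ncard_inter_eq_card_trace (F : Set (Set α)) (A : Finset α) :
    {s : Set α | ∃ S ∈ F, s = ↑A ∩ S}.ncard = #(trace F A) := by
  classical
  have himage : {s : Set α | ∃ S ∈ F, s = ↑A ∩ S} = (↑) '' (trace F A : Set (Finset α)) := by
    ext s
    simp only [Set.mem_ofPred_eq, Set.mem_image, mem_coe, mem_trace]
    constructor
    · rintro ⟨S, hS, rfl⟩
      refine ⟨A.filter (· ∈ S), ⟨filter_subset _ _, S, hS, ?_⟩, ?_⟩ <;> simp [Set.ext_iff]
    · rintro ⟨t, ⟨-, S, hS, htS⟩, rfl⟩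
      exact ⟨S, hS, htS⟩
  rw [himage, Set.ncard_image_of_injective _ coe_injective, Set.ncard_coe_finset]

theorem Shatters.exists_eq_inter_of_trace [DecidableEq α] {F : Set (Set α)} {A s t : Finset α}
    (hs : (trace F A).Shatters s) (ht : t ⊆ s) : ∃ S ∈ F, (t : Set α) = ↑s ∩ S := by
  obtain ⟨u, hu, rfl⟩ := hs ht
  obtain ⟨v, hv, hsv⟩ := hs.exists_superset
  have hsA : s ⊆ A := hsv.trans (mem_powerset.1 (trace_subset_powerset F A hv))
  obtain ⟨S, hS, huS⟩ := (mem_trace.1 hu).2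
  refine ⟨S, hS, ?_⟩
  rw [coe_inter, huS, ← Set.inter_assoc, Set.inter_eq_left.2 (coe_subset.2 hsA)]

theorem vcDim_trace_le [DecidableEq α] {F : Set (Set α)} {d : ℕ}
    (hVC : ∀ B : Finset α, #B = d + 1 → ∃ t ⊆ B, ∀ S ∈ F, (t : Set α) ≠ ↑B ∩ S)
    (A : Finset α) : (trace F A).vcDim ≤ d := by
  refine Finset.sup_le fun s hs => ?_
  by_contra! hcard
  obtain ⟨B, hBs, hB⟩ := exists_subset_card_eq (Nat.succ_le_of_lt hcard)
  obtain ⟨t, htB, hnot⟩ := hVC B hB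
  obtain ⟨S, hS, htS⟩ := ((mem_shatterer.1 hs).mono_right hBs).exists_eq_inter_of_trace htB
  exact hnot S hS htS

end Finset

/-- Sauer–Shelah: if no `(d+1)`-element set is shattered by `F`, then the trace of `F` on an
`n`-element set has at most `∑_{i ≤ d} C(n, i)` members. -/
theorem stmt_13 {X : Type*} (F : Set (Set X)) (d : ℕ)
    (hVC : ∀ B : Finset X, B.card = d + 1 →
      ∃ t ⊆ B, ∀ S ∈ F, (↑t : Set X) ≠ ↑B ∩ S)
    (A : Finset X) (n : ℕ) (hA : A.card = n) :
    Set.ncard {s : Set X | ∃ S ∈ F, s = ↑A ∩ S} ≤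
      ∑ i ∈ Finset.range (d + 1), n.choose i := by
  classical
  rw [ncard_inter_eq_card_trace, ← hA]
  exact card_le_sum_choose_of_subset_powerset (trace_subset_powerset F A) (vcDim_trace_le hVC A)
end

section
/- Let F be a family of subsets of X each of which is a singleton, an initial segment {x : x < c}, or a coset of a subgroup W. Then for any finite A ⊆ X with |A| = k, the number of distinct nonempty intersections of finitely many members of F, intersected with A, is O(k²); concretely, at most 1 + (number of pairwise intersections), and since the family of traces is determined by at most 2 generators, the trace family of all finite intersections on A has size at most C·k² for an absolute constant C. -/
/-!
Let `m` be the largest point of a nonempty trace `A ∩ ⋂ᵢ Bᵢ`. Below `m`, each basic set `Bᵢ`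
containing `m` looks like one of `{m}`, the coset `m + W`, or everything, and these three sets
form a chain. Hence the trace is `A ∩ Iic m ∩ T` with `T` one of the three, so there are at most
`3k + 1` traces.
-/

open Set

section

variable {X : Type*} [AddGroup X]

def IsBasic [LT X] (W : AddSubgroup X) (B : Set X) : Prop :=
  (∃ c, B = {c}) ∨ (∃ c, B = {x | x < c}) ∨ (∃ c, B = {x | x - c ∈ W})

lemma exists_iInter_eq_of_monotone {ι α β : Type*} [Finite ι] [Nonempty ι] [LinearOrder α]
    {ℓ : α → Set β} (hℓ : Monotone ℓ) (j : ι → α) : ∃ i, ⋂ k, ℓ (j k) = ℓ (j i) := by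
  obtain ⟨i, hi⟩ := Finite.exists_min j
  exact ⟨i, (iInter_subset _ i).antisymm (subset_iInter fun k => hℓ (hi k))⟩

lemma AddSubgroup.setOf_sub_mem_eq_of_sub_mem_s16 {W : AddSubgroup X} {m c : X}
    (h : m - c ∈ W) : {x | x - c ∈ W} = {x | x - m ∈ W} := by
  ext x
  simp only [mem_ofPred_eq]
  constructor
  · intro hx
    simpa using W.sub_mem hx h
  · intro hx
    simpa using W.add_mem hx h

def cosetChain (W : AddSubgroup X) (m : X) : Fin 3 → Set X
  | 0 => {m}
  | 1 => {x | x - m ∈ W}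
  | 2 => univ

lemma monotone_cosetChain (W : AddSubgroup X) (m : X) : Monotone (cosetChain W m) := by
  refine Fin.monotone_iff_le_succ.mpr fun i => ?_
  fin_cases i
  · simp [cosetChain]
  · exact subset_univ _

lemma IsBasic.exists_inter_Iic_eq [Preorder X] {W : AddSubgroup X} {B : Set X}
    (hB : IsBasic W B) {m : X} (hm : m ∈ B) : ∃ t, B ∩ Iic m = Iic m ∩ cosetChain W m t := by
  rcases hB with ⟨c, rfl⟩ | ⟨c, rfl⟩ | ⟨c, rfl⟩
  · refine ⟨0, ?_⟩
    rw [mem_singleton_iff.mp hm]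
    simp [cosetChain]
  · refine ⟨2, ?_⟩
    have : Iic m ⊆ {x | x < c} := fun x hx => lt_of_le_of_lt hx hm
    simp [cosetChain, this]
  · refine ⟨1, ?_⟩
    rw [AddSubgroup.setOf_sub_mem_eq_of_sub_mem_s16 hm, inter_comm]
    rfl

lemma exists_trace_eq [LinearOrder X] {ι : Type*} [Finite ι] [Nonempty ι] {W : AddSubgroup X}
    {B : ι → Set X} (hB : ∀ i, IsBasic W (B i)) (A : Finset X)
    (hne : (↑A ∩ ⋂ i, B i).Nonempty) :
    ∃ m ∈ A, ∃ t, ↑A ∩ ⋂ i, B i = ↑A ∩ Iic m ∩ cosetChain W m t := by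
  obtain ⟨m, ⟨hmA, hmB⟩, hmax⟩ := exists_max_image _ id (A.finite_toSet.inter_of_left _) hne
  have hmBi : ∀ i, m ∈ B i := mem_iInter.mp hmB
  choose j hj using fun i => (hB i).exists_inter_Iic_eq (hmBi i)
  obtain ⟨i₀, hi₀⟩ := exists_iInter_eq_of_monotone (monotone_cosetChain W m) j
  have hbelow : (⋂ i, B i) ∩ Iic m = Iic m ∩ cosetChain W m (j i₀) := by
    rw [iInter_inter, iInter_congr hj, ← inter_iInter, hi₀]
  refine ⟨m, hmA, j i₀, ?_⟩
  rw [inter_assoc, ← hbelow, ← inter_assoc, eq_comm, inter_eq_left]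
  exact hmax

end

theorem stmt_16_general {X : Type*} [AddCommGroup X] [LinearOrder X] (W : AddSubgroup X) (k : ℕ)
    (A : Finset X) (hA : A.card = k) :
    Set.ncard {s : Set X | ∃ (n : ℕ) (B : Fin (n + 1) → Set X),
      (∀ i, (∃ c, B i = {c}) ∨ (∃ c, B i = {x | x < c}) ∨ (∃ c, B i = {x | x - c ∈ W})) ∧
      (⋂ i, B i).Nonempty ∧ s = ↑A ∩ ⋂ i, B i} ≤ (k + 2) ^ 2 + (k + 2) := by
  let trace : A × Fin 3 → Set X := fun p => ↑A ∩ Iic (p.1 : X) ∩ cosetChain W p.1 p.2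
  have hcard : (range trace).ncard ≤ 3 * k := by
    rw [← Nat.card_coe_set_eq]
    refine (Finite.card_range_le trace).trans_eq ?_
    simp [hA, mul_comm]
  calc _ ≤ (insert ∅ (range trace)).ncard := by
        refine ncard_le_ncard ?_ ((finite_range _).insert _)
        rintro s ⟨n, B, hB, -, rfl⟩
        rcases (↑A ∩ ⋂ i, B i).eq_empty_or_nonempty with h | h
        · exact Or.inl h
        · obtain ⟨m, hm, t, ht⟩ := exists_trace_eq hB A h
          exact Or.inr ⟨(⟨m, hm⟩, t), ht.symm⟩
    _ ≤ 3 * k + 1 := (ncard_insert_le _ _).trans (by omega)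
    _ ≤ (k + 2) ^ 2 + (k + 2) := by nlinarith

/-- The family of singletons, strict initial segments and cosets of `W` traces at most
quadratically many nonempty finite intersections on a `k`-element set. -/
theorem stmt_16 {X : Type*} [AddCommGroup X] [LinearOrder X] [IsOrderedAddMonoid X] (W : AddSubgroup X) (k : ℕ)
    (A : Finset X) (hA : A.card = k) :
    Set.ncard {s : Set X | ∃ (n : ℕ) (B : Fin (n + 1) → Set X),
      (∀ i, (∃ c, B i = {c}) ∨ (∃ c, B i = {x | x < c}) ∨ (∃ c, B i = {x | x - c ∈ W})) ∧
      (⋂ i, B i).Nonempty ∧ s = ↑A ∩ ⋂ i, B i} ≤ (k + 2) ^ 2 + (k + 2) :=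
  stmt_16_general W k A hA
end
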